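/- arXiv:1110.4266 — 4 statements merged into one kernel-verified Lean document; each statement's English description precedes it below -/
import Mathlib

section
/- Let a_1, …, a_12 be pairwise distinct complex numbers and let p(u) = ∏_{i=1}^{12} (u − a_i) ∈ ℂ[u]. Then there is no point (u, x, y, z) ∈ ℂ⁴ with (x, y, z) ≠ (0, 0, 0) at which all five of the following vanish simultaneously: f₀ = y²z − x³ − p(u)z³, ∂f₀/∂x = −3x², ∂f₀/∂y = 2yz, ∂f₀/∂z = y² − 3p(u)z², and ∂f₀/∂u = −p′(u)z³. That is, the hypersurface y²z = x³ + p(u)z³ is smooth on the chart 𝔸¹ × ℙ². -/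
open Polynomial

/-! The vanishing of `∂f₀/∂x`, `∂f₀/∂y`, `∂f₀/∂z` forces `x = y = 0` and `z ≠ 0`; then `∂f₀/∂z`
and `∂f₀/∂u` say that `u` is a common root of `p` and `p'`, i.e. a multiple root, which a
product of distinct linear factors does not have. -/

theorem eval_eq_zero_and_eval_derivative_eq_zero_of_singular {K : Type*} [Field K]
    (h2 : (2 : K) ≠ 0) (h3 : (3 : K) ≠ 0) (p : K[X]) {u x y z : K}
    (hne : (x, y, z) ≠ (0, 0, 0)) (hx : -3 * x ^ 2 = 0) (hy : 2 * y * z = 0)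
    (hz : y ^ 2 - 3 * p.eval u * z ^ 2 = 0) (hu : -(p.derivative.eval u) * z ^ 3 = 0) :
    p.eval u = 0 ∧ p.derivative.eval u = 0 := by
  have hx0 : x = 0 := by simpa [h3] using hx
  have hz0 : z ≠ 0 := by
    rintro rfl
    have hy0 : y = 0 := by simpa using hz
    exact hne (by simp [hx0, hy0])
  have hy0 : y = 0 := by simpa [h2, hz0] using hy
  subst hy0
  exact ⟨by simpa [h3, hz0] using hz, by simpa [hz0] using hu⟩

/-- The chart-`W₀` Jacobian computation: for pairwise distinct `a₁, …, a₁₂ ∈ ℂ` and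
`p(u) = ∏ (u - aᵢ)`, the hypersurface `y²z = x³ + p(u)z³` is smooth on `𝔸¹ × ℙ²`:
there is no point `(u, x, y, z)` with `(x, y, z) ≠ (0,0,0)` at which `f₀` and all four
partial derivatives vanish simultaneously. -/
theorem stmt_0 (a : Fin 12 → ℂ) (ha : Function.Injective a)
    (p : Polynomial ℂ) (hp : p = ∏ i : Fin 12, (X - C (a i))) :
    ¬ ∃ u x y z : ℂ, (x, y, z) ≠ (0, 0, 0) ∧
      y ^ 2 * z - x ^ 3 - p.eval u * z ^ 3 = 0 ∧
      -3 * x ^ 2 = 0 ∧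
      2 * y * z = 0 ∧
      y ^ 2 - 3 * p.eval u * z ^ 2 = 0 ∧
      -(p.derivative.eval u) * z ^ 3 = 0 := by
  rintro ⟨u, x, y, z, hne, -, hx, hy, hz, hu⟩
  obtain ⟨hpu, hpu'⟩ :=
    eval_eq_zero_and_eval_derivative_eq_zero_of_singular two_ne_zero three_ne_zero p hne hx hy hz hu
  have hsep : p.Separable := hp ▸ separable_prod_X_sub_C_iff.mpr ha
  exact hsep.eval₂_derivative_ne_zero (RingHom.id ℂ) hpu hpu'
end

section
/- Let a_1, …, a_12 be pairwise distinct complex numbers and let q(u) = ∏_{i=1}^{12} (1 − a_i u) ∈ ℂ[u]. Then there is no point (u, x, y, z) ∈ ℂ⁴ with (x, y, z) ≠ (0, 0, 0) at which all five of the following vanish simultaneously: f₁ = y²z − x³ − q(u)z³, ∂f₁/∂x = −3x², ∂f₁/∂y = 2yz, ∂f₁/∂z = y² − 3q(u)z², and ∂f₁/∂u = −q′(u)z³. That is, the hypersurface y²z = x³ + q(u)z³ is smooth on the chart 𝔸¹ × ℙ². -/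
/-!
At a singular point `x = 0` and `yz = 0`; since `(x, y, z) ≠ 0` and `∂f₁/∂z = y² - 3qz²`, this forces
`z ≠ 0`, `y = 0`, and then `q(u) = q'(u) = 0`. But `q` is separable: the factors `1 - aᵢu` are
pairwise coprime (`aⱼ(1 - aᵢu) - aᵢ(1 - aⱼu) = aⱼ - aᵢ`) and each is coprime to its derivative.
-/

open Polynomial

namespace Polynomial

theorem separable_one_sub_C_mul_X {R : Type*} [CommRing R] (a : R) :
    (1 - C a * X).Separable :=
  ⟨1, -X, by rw [derivative_sub, derivative_one, derivative_C_mul_X]; ring⟩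

theorem isCoprime_one_sub_C_mul_X {K : Type*} [Field K] {a b : K} (hab : a ≠ b) :
    IsCoprime (1 - C a * X) (1 - C b * X) := by
  have hba : b - a ≠ 0 := sub_ne_zero.mpr hab.symm
  refine ⟨C ((b - a)⁻¹ * b), -C ((b - a)⁻¹ * a), ?_⟩
  calc _ = C ((b - a)⁻¹ * (b - a)) := by simp only [C_mul, C_sub]; ring
    _ = 1 := by rw [inv_mul_cancel₀ hba, C_1]

theorem separable_prod_one_sub_C_mul_X {K ι : Type*} [Field K] [Fintype ι] {a : ι → K}
    (ha : Function.Injective a) : (∏ i, (1 - C (a i) * X)).Separable :=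
  separable_prod (fun _ _ hij => isCoprime_one_sub_C_mul_X (ha.ne hij))
    fun i => separable_one_sub_C_mul_X (a i)

end Polynomial

theorem not_singular_of_separable {K : Type*} [Field K] (h2 : (2 : K) ≠ 0) (h3 : (3 : K) ≠ 0)
    {q : K[X]} (hq : q.Separable) {u x y z : K} (hxyz : (x, y, z) ≠ (0, 0, 0))
    (hx : -3 * x ^ 2 = 0) (hy : 2 * y * z = 0) (hz : y ^ 2 - 3 * q.eval u * z ^ 2 = 0)
    (hu : -(q.derivative.eval u) * z ^ 3 = 0) : False := by
  have hx0 : x = 0 := by simpa [h3] using hx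
  by_cases hz0 : z = 0
  · have hy0 : y = 0 := by simpa [hz0] using hz
    exact hxyz (by simp [hx0, hy0, hz0])
  have hy0 : y = 0 := by simpa [h2, hz0] using hy
  have hqu : q.eval u = 0 := by simpa [hy0, h3, hz0] using hz
  have hq'u : q.derivative.eval u = 0 := by simpa [hz0] using hu
  exact hq.eval₂_derivative_ne_zero (RingHom.id K) hqu hq'u

/-- The chart-`W₁` Jacobian computation: for pairwise distinct `a₁, …, a₁₂ ∈ ℂ` and
`q(u) = ∏ (1 - aᵢ u)`, the hypersurface `y²z = x³ + q(u)z³` is smooth on `𝔸¹ × ℙ²`. -/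
theorem stmt_1 (a : Fin 12 → ℂ) (ha : Function.Injective a)
    (q : Polynomial ℂ) (hq : q = ∏ i : Fin 12, (1 - C (a i) * X)) :
    ¬ ∃ u x y z : ℂ, (x, y, z) ≠ (0, 0, 0) ∧
      y ^ 2 * z - x ^ 3 - q.eval u * z ^ 3 = 0 ∧
      -3 * x ^ 2 = 0 ∧
      2 * y * z = 0 ∧
      y ^ 2 - 3 * q.eval u * z ^ 2 = 0 ∧
      -(q.derivative.eval u) * z ^ 3 = 0 := by
  rintro ⟨u, x, y, z, hxyz, -, hx, hy, hz, hu⟩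
  have hsep : q.Separable := hq ▸ separable_prod_one_sub_C_mul_X ha
  exact not_singular_of_separable two_ne_zero three_ne_zero hsep hxyz hx hy hz hu
end

section
/- Let A, B ∈ ℂ[u] be polynomials such that the polynomial 4A³ + 27B² is nonzero and has no repeated roots. Then the affine Weierstrass surface {(u, x, y) ∈ ℂ³ : y² = x³ + A(u)x + B(u)} is smooth: there is no point (u, x, y) ∈ ℂ³ at which all four of y² − x³ − A(u)x − B(u), 2y, 3x² + A(u), and A′(u)x + B′(u) vanish simultaneously. -/
open Polynomial

/-!
At a singular point `(u, x, y)` one has `y = 0`, `A(u) = -3x²` and `B(u) = 2x³`, so `u` is a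
root of `Δ = 4A³ + 27B²`; moreover `Δ'(u) = 108x³ (A'(u)x + B'(u)) = 0`. Thus `u` is a double
root of `Δ`, which is impossible because over a perfect field squarefree means separable.
-/

section Weierstrass

variable {R : Type*} [CommRing R]

theorem derivative_four_mul_pow_three_add_twentySeven_mul_sq (A B : R[X]) :
    derivative (4 * A ^ 3 + 27 * B ^ 2) =
      12 * A ^ 2 * derivative A + 54 * B * derivative B := by
  simp only [derivative_add, derivative_mul, derivative_pow, derivative_ofNat, map_ofNat,
    Nat.cast_ofNat]
  ring

variable [NoZeroDivisors R] [NeZero (2 : R)] {A B : R[X]} {u x y : R}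

theorem eval_eq_of_weierstrass_singular (h₁ : y ^ 2 - x ^ 3 - A.eval u * x - B.eval u = 0)
    (h₂ : 2 * y = 0) (h₃ : 3 * x ^ 2 + A.eval u = 0) :
    A.eval u = -3 * x ^ 2 ∧ B.eval u = 2 * x ^ 3 := by
  obtain rfl : y = 0 := (mul_eq_zero.1 h₂).resolve_left two_ne_zero
  exact ⟨by linear_combination h₃, by linear_combination -h₁ - x * h₃⟩

theorem isRoot_of_weierstrass_singular (h₁ : y ^ 2 - x ^ 3 - A.eval u * x - B.eval u = 0)
    (h₂ : 2 * y = 0) (h₃ : 3 * x ^ 2 + A.eval u = 0) :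
    (4 * A ^ 3 + 27 * B ^ 2).IsRoot u := by
  obtain ⟨hA, hB⟩ := eval_eq_of_weierstrass_singular h₁ h₂ h₃
  simp only [IsRoot, eval_add, eval_mul, eval_pow, eval_ofNat, hA, hB]
  ring

theorem isRoot_derivative_of_weierstrass_singular
    (h₁ : y ^ 2 - x ^ 3 - A.eval u * x - B.eval u = 0) (h₂ : 2 * y = 0)
    (h₃ : 3 * x ^ 2 + A.eval u = 0) (h₄ : A.derivative.eval u * x + B.derivative.eval u = 0) :
    (derivative (4 * A ^ 3 + 27 * B ^ 2)).IsRoot u := by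
  obtain ⟨hA, hB⟩ := eval_eq_of_weierstrass_singular h₁ h₂ h₃
  rw [derivative_four_mul_pow_three_add_twentySeven_mul_sq]
  simp only [IsRoot, eval_add, eval_mul, eval_pow, eval_ofNat, hA, hB]
  linear_combination (108 * x ^ 3) * h₄

end Weierstrass

theorem stmt_3_general (A B : Polynomial ℂ)
    (hsf : Squarefree (4 * A ^ 3 + 27 * B ^ 2)) :
    ¬ ∃ u x y : ℂ,
      y ^ 2 - x ^ 3 - A.eval u * x - B.eval u = 0 ∧
      2 * y = 0 ∧
      3 * x ^ 2 + A.eval u = 0 ∧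
      A.derivative.eval u * x + B.derivative.eval u = 0 := by
  rintro ⟨u, x, y, h₁, h₂, h₃, h₄⟩
  exact (PerfectField.separable_iff_squarefree.2 hsf).eval₂_derivative_ne_zero (RingHom.id ℂ)
    (isRoot_of_weierstrass_singular h₁ h₂ h₃)
    (isRoot_derivative_of_weierstrass_singular h₁ h₂ h₃ h₄)

/-- If `4A³ + 27B²` is a nonzero polynomial with no repeated roots, then the affine
Weierstrass surface `y² = x³ + A(u)x + B(u)` in `ℂ³` is smooth: the defining equation
and its three partial derivatives have no common zero. -/
theorem stmt_3 (A B : Polynomial ℂ)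
    (hne : 4 * A ^ 3 + 27 * B ^ 2 ≠ 0)
    (hsf : Squarefree (4 * A ^ 3 + 27 * B ^ 2)) :
    ¬ ∃ u x y : ℂ,
      y ^ 2 - x ^ 3 - A.eval u * x - B.eval u = 0 ∧
      2 * y = 0 ∧
      3 * x ^ 2 + A.eval u = 0 ∧
      A.derivative.eval u * x + B.derivative.eval u = 0 :=
  stmt_3_general A B hsf
end

section
/- Let a_1, …, a_12 be pairwise distinct complex numbers, let K ∈ ℂ be nonzero, let c, δ ∈ ℂ satisfy c³ = K² and δ³ = −27/4, and set p(t) = ∏_{i=1}^{12} (t − a_i) ∈ ℂ[t]. Suppose the polynomial p + 2K has no repeated roots. Then there is no point (u, x, y) ∈ ℂ³ at which all four of y² − x³ − cδ·x − (p(u) + K), 2y, 3x² + cδ, and p′(u) vanish simultaneously; that is, the affine Weierstrass surface y² = x³ + cδ·x + (p(u) + K) over the chart U₀ is smooth. -/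
/-!
At a singular point of `y² = x³ + A x + B` we have `y = 0` and `x` is a double root of the
cubic, so its discriminant `4A³ + 27B²` vanishes. With `A = cδ` and `B = p(u) + K` the relation
`(cδ)³ = -27K²/4` turns this into `p(u) (p(u) + 2K) = 0`. Both `p` (distinct roots `aᵢ`) and
`p + 2K` are separable, so neither shares a root with its derivative `p'`.
-/

open Polynomial

theorem cubic_discr_eq_zero_of_singular {F : Type*} [Field F] [NeZero (2 : F)] {A B x y : F}
    (hf : y ^ 2 - x ^ 3 - A * x - B = 0) (hy : 2 * y = 0) (hx : 3 * x ^ 2 + A = 0) :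
    4 * A ^ 3 + 27 * B ^ 2 = 0 := by
  obtain rfl : y = 0 := (mul_eq_zero.mp hy).resolve_left two_ne_zero
  have hA : A = -3 * x ^ 2 := by linear_combination hx
  have hB : B = 2 * x ^ 3 := by linear_combination -hf - x * hx
  rw [hA, hB]
  ring

theorem Polynomial.Separable.eval_derivative_ne_zero {R : Type*} [CommRing R] [Nontrivial R]
    {q : R[X]} (h : q.Separable) {x : R} (hx : q.eval x = 0) : q.derivative.eval x ≠ 0 :=
  h.eval₂_derivative_ne_zero (RingHom.id R) hx

theorem stmt_10_general (a : Fin 12 → ℂ) (ha : Function.Injective a) (K : ℂ)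
    (c δ : ℂ) (hc : c ^ 3 = K ^ 2) (hδ : δ ^ 3 = -27 / 4)
    (p : Polynomial ℂ) (hp : p = ∏ i : Fin 12, (X - C (a i)))
    (hsf : Squarefree (p + C (2 * K))) :
    ¬ ∃ u x y : ℂ,
      y ^ 2 - x ^ 3 - c * δ * x - (p.eval u + K) = 0 ∧
      2 * y = 0 ∧
      3 * x ^ 2 + c * δ = 0 ∧
      p.derivative.eval u = 0 := by
  rintro ⟨u, x, y, hf, hy, hx, hu⟩
  have hdisc := cubic_discr_eq_zero_of_singular hf hy hx
  have hcδ : (c * δ) ^ 3 = -27 / 4 * K ^ 2 := by rw [mul_pow, hc, hδ]; ring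
  have hroot : p.eval u * (p.eval u + 2 * K) = 0 := by
    linear_combination (1 / 27) * hdisc - (4 / 27) * hcδ
  rcases mul_eq_zero.mp hroot with hp0 | hp2K
  · have hsep : p.Separable := hp ▸ separable_prod_X_sub_C_iff.mpr ha
    exact hsep.eval_derivative_ne_zero hp0 hu
  · have hsep : (p + C (2 * K)).Separable := PerfectField.separable_iff_squarefree.mpr hsf
    exact hsep.eval_derivative_ne_zero (by simpa using hp2K) (by simpa using hu)

/-- Smoothness of the elliptic K3 surface `X_{(aᵢ),K}` on the chart `U₀`: with
`c³ = K²`, `δ³ = -27/4`, `p(t) = ∏ (t - aᵢ)` and `p + 2K` squarefree, the affine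
Weierstrass surface `y² = x³ + cδ·x + (p(u) + K)` is smooth. -/
theorem stmt_10 (a : Fin 12 → ℂ) (ha : Function.Injective a) (K : ℂ) (hK : K ≠ 0)
    (c δ : ℂ) (hc : c ^ 3 = K ^ 2) (hδ : δ ^ 3 = -27 / 4)
    (p : Polynomial ℂ) (hp : p = ∏ i : Fin 12, (X - C (a i)))
    (hsf : Squarefree (p + C (2 * K))) :
    ¬ ∃ u x y : ℂ,
      y ^ 2 - x ^ 3 - c * δ * x - (p.eval u + K) = 0 ∧
      2 * y = 0 ∧
      3 * x ^ 2 + c * δ = 0 ∧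
      p.derivative.eval u = 0 :=
  stmt_10_general a ha K c δ hc hδ p hp hsf
end
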